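/- Every Kepler ellipse with minor axis B > 0 passing through the point (x₁, 0), x₁ > 0, is tangent to the parabola y² = 4p(x + p) with p = B²/(4x₁). -/

import Mathlib

/-!
The point of contact is `q = (p (s² - 1), -2 p s)` with `s = b x₁`, a point of the parabola
`y² = 4p(x + p)` (rationally parametrised by `s`, focus at the origin) with `|q| = p (s² + 1)`.
Passing through `(x₁, 0)` means `(a + c) x₁ = 1`; then `b = s (a + c)`, which is exactly the
condition for the gradient `(a + c x/r, b + c y/r)` of the Kepler form to be parallel to the
normal `(-4p, 2y)` of the parabola at `q`. The minor axis condition `c² - a² = b² + 4/B²`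
then puts `q` on the ellipse.
-/

section

/-- Rational parametrisation of the parabola `y² = 4p(x + p)`. -/
def parabolaPoint (p s : ℝ) : ℝ × ℝ := (p * (s ^ 2 - 1), -(2 * p * s))

variable {p s : ℝ}

lemma parabolaPoint_sq_snd (p s : ℝ) :
    (parabolaPoint p s).2 ^ 2 = 4 * p * ((parabolaPoint p s).1 + p) := by
  simp only [parabolaPoint]
  ring

lemma sqrt_parabolaPoint (hp : 0 ≤ p) :
    √((parabolaPoint p s).1 ^ 2 + (parabolaPoint p s).2 ^ 2) = p * (s ^ 2 + 1) := by
  rw [Real.sqrt_eq_iff_eq_sq (by positivity) (by positivity)]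
  simp only [parabolaPoint]
  ring

lemma parabolaPoint_ne_zero (hp : p ≠ 0) : parabolaPoint p s ≠ 0 := by
  intro h
  have hfst : p * (s ^ 2 - 1) = 0 := congrArg Prod.fst h
  have hsnd : -(2 * p * s) = 0 := congrArg Prod.snd h
  have hs : s = 0 := by simpa [hp] using hsnd
  simp [hs, hp] at hfst

lemma kepler_parabolaPoint (a b c : ℝ) (hp : 0 ≤ p) :
    a * (parabolaPoint p s).1 + b * (parabolaPoint p s).2
        + c * √((parabolaPoint p s).1 ^ 2 + (parabolaPoint p s).2 ^ 2)
      = p * ((a + c) * s ^ 2 - 2 * b * s + (c - a)) := by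
  rw [sqrt_parabolaPoint hp]
  simp only [parabolaPoint]
  ring

lemma kepler_gradient_parallel_parabolaPoint {a b c : ℝ} (hp : 0 < p) (hb : b = s * (a + c)) :
    ∃ t : ℝ,
      a + c * (parabolaPoint p s).1 /
          √((parabolaPoint p s).1 ^ 2 + (parabolaPoint p s).2 ^ 2) = t * (-(4 * p)) ∧
      b + c * (parabolaPoint p s).2 /
          √((parabolaPoint p s).1 ^ 2 + (parabolaPoint p s).2 ^ 2)
        = t * (2 * (parabolaPoint p s).2) := by
  refine ⟨-(a * (s ^ 2 + 1) + c * (s ^ 2 - 1)) / (4 * p * (s ^ 2 + 1)), ?_, ?_⟩ <;>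
    rw [sqrt_parabolaPoint hp.le] <;> simp only [parabolaPoint] <;> field_simp
  linear_combination 4 * (s ^ 2 + 1) * hb

end

theorem fixed_minor_axis_envelope_parabola
    (B x₁ a b c : ℝ) (hB : 0 < B) (hx₁ : 0 < x₁)
    (hminor : a ^ 2 + b ^ 2 - c ^ 2 = -(4 / B ^ 2))
    (hthrough : a * x₁ + c * Real.sqrt (x₁ ^ 2 + 0 ^ 2) = 1) :
    ∃ q : ℝ × ℝ, q ≠ 0 ∧
      a * q.1 + b * q.2 + c * Real.sqrt (q.1 ^ 2 + q.2 ^ 2) = 1 ∧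
      q.2 ^ 2 = 4 * (B ^ 2 / (4 * x₁)) * (q.1 + B ^ 2 / (4 * x₁)) ∧
      ∃ t : ℝ,
        a + c * q.1 / Real.sqrt (q.1 ^ 2 + q.2 ^ 2)
            = t * (-(4 * (B ^ 2 / (4 * x₁)))) ∧
        b + c * q.2 / Real.sqrt (q.1 ^ 2 + q.2 ^ 2) = t * (2 * q.2) := by
  set p := B ^ 2 / (4 * x₁) with hp_def
  have hp : 0 < p := by positivity
  have hsum : (a + c) * x₁ = 1 := by
    rw [zero_pow two_ne_zero, add_zero, Real.sqrt_sq hx₁.le] at hthrough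
    linarith
  have hb : b = b * x₁ * (a + c) := by linear_combination (-b) * hsum
  refine ⟨parabolaPoint p (b * x₁), parabolaPoint_ne_zero hp.ne', ?_, parabolaPoint_sq_snd p _,
    kepler_gradient_parallel_parabolaPoint hp hb⟩
  have hminor_mul : (c ^ 2 - a ^ 2 - b ^ 2) * B ^ 2 = 4 := by
    rw [show c ^ 2 - a ^ 2 - b ^ 2 = 4 / B ^ 2 by linarith]
    field_simp
  rw [kepler_parabolaPoint a b c hp.le, hp_def]
  field_simp
  linear_combination x₁ * hminor_mul + B ^ 2 * (b ^ 2 * x₁ - (c - a)) * hsum
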